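/- arXiv:1103.4963 — 2 statements merged into one kernel-verified Lean document; each statement's English description precedes it below -/
import Mathlib

section
/- Let p > 3 be a prime, k a number field, and E an elliptic curve over k. Fix an F_p-basis of E[p], viewing G₁ as a subgroup of GL₂(F_p), and let G_D = G₁ ∩ D, where D is the subgroup of diagonal matrices of GL₂(F_p). If G_D is not cyclic, then H¹(G_n, E[p^n]) = 0 for every n ∈ N. -/
open WeierstrassCurve WeierstrassCurve.Affine

namespace LGD

variable {k : Type*} [Field k] (W : WeierstrassCurve k)

local notation "kb" => AlgebraicClosure k

/-- The (multiplicative) automorphism group structure on `AddAut M` of the older Mathlib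
(composition as multiplication); current Mathlib makes `AddAut M` an additive group instead. -/
instance addAutGroupOld {M : Type*} [Add M] : Group (AddAut M) where
  mul g h := AddEquiv.trans h g
  one := AddEquiv.refl _
  inv := AddEquiv.symm
  mul_assoc _ _ _ := rfl
  one_mul _ := rfl
  mul_one _ := rfl
  inv_mul_cancel := AddEquiv.self_trans_symm

/-- Classical decidable equality on `kb`: the group law on points now takes `[DecidableEq]`
as an argument, where the older Mathlib decided equality classically. -/
noncomputable instance decEqAlgClosureOld : DecidableEq kb := Classical.decEq _

/-- The action of the absolute Galois group of `k` on the points of `W` over an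
algebraic closure of `k`. -/
noncomputable def galHom : (kb ≃ₐ[k] kb) →* AddAut (W.baseChange kb).toAffine.Point where
  toFun σ :=
    { toFun := Point.map (W' := W) σ.toAlgHom
      invFun := Point.map (W' := W) σ.symm.toAlgHom
      left_inv := fun P => by
        rw [Point.map_map]
        have h : (σ.symm.toAlgHom.comp σ.toAlgHom : kb →ₐ[k] kb) = AlgHom.id k kb := by
          ext x; exact σ.symm_apply_apply x
        rw [h]; cases P <;> rfl
      right_inv := fun P => by
        rw [Point.map_map]
        have h : (σ.toAlgHom.comp σ.symm.toAlgHom : kb →ₐ[k] kb) = AlgHom.id k kb := by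
          ext x; exact σ.apply_symm_apply x
        rw [h]; cases P <;> rfl
      map_add' := map_add _ }
  map_one' := by
    ext P
    show Point.map (W' := W) (1 : kb ≃ₐ[k] kb).toAlgHom P = P
    cases P <;> rfl
  map_mul' σ τ := by
    ext P
    show Point.map (W' := W) (σ * τ).toAlgHom P = Point.map (W' := W) σ.toAlgHom (Point.map (W' := W) τ.toAlgHom P)
    rw [Point.map_map]
    rfl

/-- The subgroup of `n`-torsion points of `W` over an algebraic closure, i.e. `E[n]`. -/
noncomputable def tors (n : ℕ) : AddSubgroup (W.baseChange kb).toAffine.Point where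
  carrier := {Q | n • Q = 0}
  zero_mem' := smul_zero n
  add_mem' := by
    intro a b ha hb
    simp only [Set.mem_setOf_eq] at *
    rw [nsmul_add, ha, hb, add_zero]
  neg_mem' := by
    intro a ha
    simp only [Set.mem_setOf_eq] at *
    have h : n • (-a) + n • a = 0 := by rw [← nsmul_add, neg_add_cancel, smul_zero]
    rwa [ha, add_zero] at h

/-- Every additive automorphism of the points restricts to the `n`-torsion subgroup. -/
noncomputable def restrictTors (n : ℕ) : AddAut (W.baseChange kb).toAffine.Point →* AddAut ↥(tors W n) where
  toFun e :=
    { toFun := fun x => ⟨e x, by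
        have hx : n • (x : (W.baseChange kb).toAffine.Point) = 0 := x.2
        show n • (e (x : (W.baseChange kb).toAffine.Point)) = 0
        rw [← map_nsmul, hx, map_zero]⟩
      invFun := fun x => ⟨e.symm x, by
        have hx : n • (x : (W.baseChange kb).toAffine.Point) = 0 := x.2
        show n • (e.symm (x : (W.baseChange kb).toAffine.Point)) = 0
        rw [← map_nsmul, hx, map_zero]⟩
      left_inv := fun x => Subtype.ext (e.symm_apply_apply x)
      right_inv := fun x => Subtype.ext (e.apply_symm_apply x)
      map_add' := fun x y => Subtype.ext (by
        show e ((x : (W.baseChange kb).toAffine.Point) + (y : (W.baseChange kb).toAffine.Point)) = e (x : (W.baseChange kb).toAffine.Point) + e (y : (W.baseChange kb).toAffine.Point)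
        exact map_add e _ _) }
  map_one' := by ext x; rfl
  map_mul' e f := by ext x; rfl

/-- The Galois representation of the absolute Galois group of `k` on the `n`-torsion
points `E[n]`; the Galois group `G_n = Gal(K_n/k)` of the paper, viewed as a subgroup of
`GL₂(ℤ/nℤ)`, is (isomorphic to) the range of this homomorphism. -/
noncomputable def torsGalHom (n : ℕ) : (kb ≃ₐ[k] kb) →* AddAut ↥(tors W n) :=
  (restrictTors W n).comp (galHom W)

/-- The set of all affine coordinates of the `n`-torsion points of `W`. -/
def torsCoords (n : ℕ) : Set kb :=
  {c | ∃ (x y : kb) (h : (W.baseChange kb).toAffine.Nonsingular x y),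
    Point.some _ _ h ∈ tors W n ∧ (c = x ∨ c = y)}

/-- The `n`-division field `K_n = k(E[n])`, generated over `k` by the coordinates of the
`n`-torsion points. -/
noncomputable def KK (n : ℕ) : IntermediateField k kb :=
  IntermediateField.adjoin k (torsCoords W n)

/-- A `1`-cocycle of a subgroup `G` of the automorphisms of an abelian group `T`,
with values in `T`. -/
def IsCocycle {T : Type*} [AddCommGroup T] {G : Subgroup (AddAut T)} (Z : G → T) : Prop :=
  ∀ g h : G, Z (g * h) = Z g + (g : AddAut T) (Z h)

/-- A `1`-coboundary: `Z g = g • w - w` for a fixed `w`.  A `1`-cocycle represents the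
trivial class in `H¹(G, T)` precisely when it is a coboundary. -/
def IsCoboundary {T : Type*} [AddCommGroup T] {G : Subgroup (AddAut T)} (Z : G → T) : Prop :=
  ∃ w : T, ∀ g : G, Z g = (g : AddAut T) w - w

/-- The local conditions of Dvornicich–Zannier: for each `g` separately, `Z g` is of the
form `g • w - w`.  A class in `H¹(G, T)` lies in `H¹_loc(G, T)` precisely when (any of)
its representing cocycles satisfies these conditions. -/
def SatisfiesLocalConditions {T : Type*} [AddCommGroup T] {G : Subgroup (AddAut T)}
    (Z : G → T) : Prop :=
  ∀ g : G, ∃ w : T, Z g = (g : AddAut T) w - w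


variable (p : ℕ)

/-- `{P₁, P₂}` is an `𝔽_p`-basis of `E[p]`: every `p`-torsion point is `a•P₁ + b•P₂`
for a unique pair `(a, b)` of elements of `ℤ/pℤ`. -/
def IsPBasis (P₁ P₂ : ↥(tors W p)) : Prop :=
  ∀ x : ↥(tors W p), ∃! ab : ZMod p × ZMod p, x = ab.1.val • P₁ + ab.2.val • P₂

/-- A subgroup of `E[p]` is a `G₁`-submodule when it is stable under the Galois action. -/
def IsGaloisStable (C : AddSubgroup ↥(tors W p)) : Prop :=
  ∀ g ∈ (torsGalHom W p).range, ∀ x ∈ C, g x ∈ C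

/-! ### Auxiliary lemmas -/

lemma addAutOld_mul_apply {M : Type*} [Add M] (g h : AddAut M) (x : M) : (g * h) x = g (h x) := rfl

lemma nsmul_mod {T : Type*} [AddCommGroup T] {N : ℕ} {x : T} (h : N • x = 0) (m : ℕ) :
    m • x = (m % N) • x := by
  conv_lhs => rw [← Nat.div_add_mod m N]
  rw [add_nsmul, mul_nsmul, h, smul_zero, zero_add]

/-- If an additive automorphism acts as multiplication by `c` on `p`-torsion, then its
`p^(n-1)`-th power acts as multiplication by `c^(p^(n-1))` on `p^n`-torsion. -/
lemma pow_scalar_of_scalar_on_ptors {T : Type*} [AddCommGroup T] (A : AddAut T) (p c : ℕ)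
    (hp0 : 0 < p) (hA : ∀ x : T, p • x = 0 → A x = c • x) :
    ∀ n : ℕ, 1 ≤ n → ∀ x : T, p ^ n • x = 0 →
      (A ^ p ^ (n - 1)) x = c ^ p ^ (n - 1) • x := by
  intro n
  induction n with
  | zero => intro h; exact absurd h (by norm_num)
  | succ n IH =>
    intro _ x hx
    rcases Nat.eq_zero_or_pos n with hn | hn
    · subst hn
      simpa using hA x (by simpa using hx)
    · set B := A ^ p ^ (n - 1) with hB
      set c' := c ^ p ^ (n - 1) with hc'
      have hps : p ^ n = p * p ^ (n - 1) := by
        rw [← pow_succ', Nat.sub_add_cancel hn]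
      have hpx : p ^ n • (p • x) = 0 := by
        rw [← mul_nsmul, ← pow_succ']
        exact hx
      have hBp : ∀ y : T, p ^ n • y = 0 → B y = c' • y := IH hn
      set E : T := B x - c' • x with hE
      have hpE : p • E = 0 := by
        have h1 : B (p • x) = c' • (p • x) := hBp _ hpx
        rw [hE, smul_sub, ← map_nsmul B p x, h1, smul_comm, sub_self]
      have hBE : B E = c' • E := by
        apply hBp
        rw [hps, mul_nsmul, hpE, smul_zero]
      have key : ∀ j : ℕ, (B ^ (j + 1)) x = c' ^ (j + 1) • x + ((j + 1) * c' ^ j) • E := by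
        intro j
        induction j with
        | zero => simp [hE]
        | succ j IHj =>
          have h0 : (B ^ (j + 1 + 1)) x = B ((B ^ (j + 1)) x) := by
            rw [pow_succ']
            rfl
          have hBx : B x = c' • x + E := by rw [hE]; abel
          rw [h0, IHj, map_add, map_nsmul B, map_nsmul B, hBx, hBE]
          rw [smul_add, ← mul_nsmul, ← mul_nsmul, add_assoc, ← add_nsmul]
          congr 1
          · rw [← pow_succ']
          · congr 1
            ring
      have hkey := key (p - 1)
      rw [Nat.sub_add_cancel hp0] at hkey
      have hzero : (p * c' ^ (p - 1)) • E = 0 := by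
        rw [mul_nsmul, hpE, smul_zero]
      rw [hzero, add_zero] at hkey
      have e1 : A ^ p ^ n = B ^ p := by
        rw [hB, ← pow_mul, ← pow_succ, Nat.sub_add_cancel hn]
      have e2 : c ^ p ^ n = c' ^ p := by
        rw [hc', ← pow_mul, ← pow_succ, Nat.sub_add_cancel hn]
      show (A ^ p ^ n) x = c ^ p ^ n • x
      rw [e1, e2]
      exact hkey

/-- Sah's lemma: if `G` contains an element acting as multiplication by `u`, with `u - 1`
invertible, then every cocycle is a coboundary. -/
lemma isCoboundary_of_scalar {T : Type*} [AddCommGroup T] {G : Subgroup (AddAut T)}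
    (Z : G → T) (hZ : IsCocycle Z) (s : G) (u e : ℕ) (hu : 1 ≤ u)
    (hs : ∀ x : T, (s : AddAut T) x = u • x)
    (he : ∀ x : T, (e * (u - 1)) • x = x) :
    IsCoboundary Z := by
  refine ⟨e • Z s, fun h => ?_⟩
  have hcomm : s * h = h * s := by
    apply Subtype.ext
    ext x
    rw [Subgroup.coe_mul, Subgroup.coe_mul, addAutOld_mul_apply, addAutOld_mul_apply, hs, hs,
      map_nsmul]
  have h1 := hZ s h
  have h2 := hZ h s
  rw [hcomm, h2] at h1
  rw [hs (Z h)] at h1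
  have hu' : u • Z h = (u - 1) • Z h + Z h := by
    conv_lhs => rw [← Nat.sub_add_cancel hu]
    rw [add_nsmul, one_nsmul]
  rw [hu'] at h1
  have key : (u - 1) • Z h = (h : AddAut T) (Z s) - Z s := by
    have habel : (u - 1) • Z h = (Z s + ((u - 1) • Z h + Z h)) - Z s - Z h := by abel
    rw [habel, ← h1]
    abel
  calc Z h = (e * (u - 1)) • Z h := (he _).symm
    _ = e • ((u - 1) • Z h) := by rw [mul_comm e (u - 1), mul_nsmul]
    _ = e • ((h : AddAut T) (Z s) - Z s) := by rw [key]
    _ = (h : AddAut T) (e • Z s) - e • Z s := by rw [smul_sub, map_nsmul]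

lemma tors_nsmul_self (N : ℕ) (x : ↥(tors W N)) : N • x = 0 := by
  have h : N • (x : (W.baseChange kb).toAffine.Point) = 0 := x.2
  apply Subtype.ext
  rw [show ((N • x : ↥(tors W N)) : (W.baseChange kb).toAffine.Point) = N • (x : (W.baseChange kb).toAffine.Point) from
    map_nsmul ((tors W N).subtype) N x, h]
  rfl

lemma scalar_lift {p : ℕ} {σ : kb ≃ₐ[k] kb} {c : ℕ} (n : ℕ)
    (h : ∀ y : ↥(tors W p), torsGalHom W p σ y = c • y) :
    ∀ x : ↥(tors W (p ^ n)), p • x = 0 → torsGalHom W (p ^ n) σ x = c • x := by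
  intro x hx
  have hx' : (x : (W.baseChange kb).toAffine.Point) ∈ tors W p := by
    show p • (x : (W.baseChange kb).toAffine.Point) = 0
    have hcoe : ((p • x : ↥(tors W (p ^ n))) : (W.baseChange kb).toAffine.Point) = p • (x : (W.baseChange kb).toAffine.Point) :=
      map_nsmul ((tors W (p ^ n)).subtype) p x
    rw [← hcoe, hx]
    rfl
  have hy := congrArg (fun z : ↥(tors W p) => (z : (W.baseChange kb).toAffine.Point)) (h ⟨(x : (W.baseChange kb).toAffine.Point), hx'⟩)
  apply Subtype.ext
  have h1 : ((torsGalHom W (p ^ n) σ x : ↥(tors W (p ^ n))) : (W.baseChange kb).toAffine.Point)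
      = Point.map (W' := W) σ.toAlgHom (x : (W.baseChange kb).toAffine.Point) := rfl
  have h2 : ((torsGalHom W p σ ⟨(x : (W.baseChange kb).toAffine.Point), hx'⟩ : ↥(tors W p)) : (W.baseChange kb).toAffine.Point)
      = Point.map (W' := W) σ.toAlgHom (x : (W.baseChange kb).toAffine.Point) := rfl
  have h3 : ((c • x : ↥(tors W (p ^ n))) : (W.baseChange kb).toAffine.Point) = c • (x : (W.baseChange kb).toAffine.Point) :=
    map_nsmul ((tors W (p ^ n)).subtype) c x
  have h4 : ((c • (⟨(x : (W.baseChange kb).toAffine.Point), hx'⟩ : ↥(tors W p)) : ↥(tors W p)) : (W.baseChange kb).toAffine.Point)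
      = c • (x : (W.baseChange kb).toAffine.Point) := map_nsmul ((tors W p).subtype) c _
  simp only [h2, h4] at hy
  rw [h1, h3, ← hy]

section StepA

variable {p : ℕ} {P₁ P₂ : ↥(tors W p)}

lemma basis_unique (hp : p.Prime) (hbasis : IsPBasis W p P₁ P₂)
    {x : ↥(tors W p)} {a b a' b' : ZMod p}
    (h1 : x = a.val • P₁ + b.val • P₂) (h2 : x = a'.val • P₁ + b'.val • P₂) :
    a = a' ∧ b = b' := by
  obtain ⟨ab, -, huniq⟩ := hbasis x
  have e1 := huniq (a, b) h1
  have e2 := huniq (a', b') h2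
  rw [← e2] at e1
  exact ⟨congrArg Prod.fst e1, congrArg Prod.snd e1⟩

lemma diag_unique₁ (hp : p.Prime) (hbasis : IsPBasis W p P₁ P₂)
    {x : ↥(tors W p)} {a a' : ZMod p}
    (h1 : x = a.val • P₁) (h2 : x = a'.val • P₁) : a = a' := by
  haveI := Fact.mk hp
  have h1' : x = a.val • P₁ + (0 : ZMod p).val • P₂ := by
    rw [ZMod.val_zero, zero_smul, add_zero]; exact h1
  have h2' : x = a'.val • P₁ + (0 : ZMod p).val • P₂ := by
    rw [ZMod.val_zero, zero_smul, add_zero]; exact h2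
  exact (basis_unique W hp hbasis h1' h2').1

lemma diag_unique₂ (hp : p.Prime) (hbasis : IsPBasis W p P₁ P₂)
    {x : ↥(tors W p)} {b b' : ZMod p}
    (h1 : x = b.val • P₂) (h2 : x = b'.val • P₂) : b = b' := by
  haveI := Fact.mk hp
  have h1' : x = (0 : ZMod p).val • P₁ + b.val • P₂ := by
    rw [ZMod.val_zero, zero_smul, zero_add]; exact h1
  have h2' : x = (0 : ZMod p).val • P₁ + b'.val • P₂ := by
    rw [ZMod.val_zero, zero_smul, zero_add]; exact h2
  exact (basis_unique W hp hbasis h1' h2').2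

lemma P₁_ne_zero (hp : p.Prime) (hbasis : IsPBasis W p P₁ P₂) : P₁ ≠ 0 := by
  haveI := Fact.mk hp
  intro h
  have h1 : (0 : ↥(tors W p)) = (1 : ZMod p).val • P₁ := by rw [h, smul_zero]
  have h2 : (0 : ↥(tors W p)) = (0 : ZMod p).val • P₁ := by
    rw [ZMod.val_zero, zero_smul]
  exact one_ne_zero (diag_unique₁ W hp hbasis h1 h2)

lemma P₂_ne_zero (hp : p.Prime) (hbasis : IsPBasis W p P₁ P₂) : P₂ ≠ 0 := by
  haveI := Fact.mk hp
  intro h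
  have h1 : (0 : ↥(tors W p)) = (1 : ZMod p).val • P₂ := by rw [h, smul_zero]
  have h2 : (0 : ↥(tors W p)) = (0 : ZMod p).val • P₂ := by
    rw [ZMod.val_zero, zero_smul]
  exact one_ne_zero (diag_unique₂ W hp hbasis h1 h2)

/-- multiplication of `ZMod` values, acting on `p`-torsion points. -/
lemma val_mul_smul (hp : p.Prime) (a b : ZMod p) (x : ↥(tors W p)) :
    (a * b).val • x = b.val • (a.val • x) := by
  rw [← mul_nsmul]
  apply (nsmul_mod (tors_nsmul_self W p x) _).trans
  rw [ZMod.val_mul, Nat.mod_mod_of_dvd _ dvd_rfl, ← nsmul_mod (tors_nsmul_self W p x)]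

/-- A diagonal automorphism with equal diagonal entries acts as a scalar everywhere. -/
lemma scalar_action (hbasis : IsPBasis W p P₁ P₂) (g : AddAut ↥(tors W p)) (a : ZMod p)
    (h1 : g P₁ = a.val • P₁) (h2 : g P₂ = a.val • P₂) (x : ↥(tors W p)) :
    g x = a.val • x := by
  obtain ⟨⟨u, v⟩, hx, -⟩ := hbasis x
  rw [hx, map_add, map_nsmul, map_nsmul, h1, h2, smul_add,
    smul_comm u.val a.val, smul_comm v.val a.val]

/-- Step A: a noncyclic diagonal part of the Galois image contains a nontrivial scalar. -/
lemma exists_scalar (hp : p.Prime) (hbasis : IsPBasis W p P₁ P₂)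
    (hnc : ¬ ∃ g₀ : AddAut ↥(tors W p),
      (g₀ ∈ (torsGalHom W p).range ∧
        ∃ a b : ZMod p, g₀ P₁ = a.val • P₁ ∧ g₀ P₂ = b.val • P₂) ∧
      ∀ g : AddAut ↥(tors W p),
        (g ∈ (torsGalHom W p).range ∧
          ∃ a b : ZMod p, g P₁ = a.val • P₁ ∧ g P₂ = b.val • P₂) →
        g ∈ Subgroup.zpowers g₀) :
    ∃ σ : kb ≃ₐ[k] kb, ∃ a : ZMod p, a ≠ 0 ∧ a ≠ 1 ∧
      ∀ x : ↥(tors W p), torsGalHom W p σ x = a.val • x := by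
  haveI := Fact.mk hp
  haveI := Fact.mk hp.one_lt
  by_contra hcon
  push_neg at hcon
  -- every diagonal automorphism in the image with equal entries is trivial
  have hscal : ∀ g : AddAut ↥(tors W p), g ∈ (torsGalHom W p).range →
      ∀ a : ZMod p, g P₁ = a.val • P₁ → g P₂ = a.val • P₂ → a = 1 := by
    intro g hg a h1 h2
    by_contra ha1
    have ha0 : a ≠ 0 := by
      intro h0
      apply P₁_ne_zero W hp hbasis
      apply g.injective
      rw [h1, h0, ZMod.val_zero, zero_smul, map_zero]
    obtain ⟨σ, hσ⟩ := hg
    obtain ⟨x, hx⟩ := hcon σ a ha0 ha1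
    exact hx (by rw [hσ]; exact scalar_action W hbasis g a h1 h2 x)
  -- nonzero diagonal entries
  have hne₁ : ∀ g : AddAut ↥(tors W p), ∀ a : ZMod p, g P₁ = a.val • P₁ → a ≠ 0 := by
    intro g a h1 h0
    apply P₁_ne_zero W hp hbasis
    apply g.injective
    rw [h1, h0, ZMod.val_zero, zero_smul, map_zero]
  have hne₂ : ∀ g : AddAut ↥(tors W p), ∀ b : ZMod p, g P₂ = b.val • P₂ → b ≠ 0 := by
    intro g b h2 h0
    apply P₂_ne_zero W hp hbasis
    apply g.injective
    rw [h2, h0, ZMod.val_zero, zero_smul, map_zero]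
  -- the subgroup of diagonal automorphisms in the image
  let S : Subgroup (AddAut ↥(tors W p)) :=
    { carrier := {g | g ∈ (torsGalHom W p).range ∧
        ∃ a b : ZMod p, g P₁ = a.val • P₁ ∧ g P₂ = b.val • P₂}
      one_mem' := ⟨(torsGalHom W p).range.one_mem, 1, 1,
        by rw [ZMod.val_one, one_smul]; rfl, by rw [ZMod.val_one, one_smul]; rfl⟩
      mul_mem' := by
        rintro g h ⟨hg, ag, bg, hg1, hg2⟩ ⟨hh, ah, bh, hh1, hh2⟩
        refine ⟨Subgroup.mul_mem _ hg hh, ag * ah, bg * bh, ?_, ?_⟩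
        · rw [addAutOld_mul_apply, hh1, map_nsmul, hg1, val_mul_smul W hp]
        · rw [addAutOld_mul_apply, hh2, map_nsmul, hg2, val_mul_smul W hp]
      inv_mem' := by
        rintro g ⟨hg, a, b, h1, h2⟩
        have ha : a ≠ 0 := hne₁ g a h1
        have hb : b ≠ 0 := hne₂ g b h2
        refine ⟨Subgroup.inv_mem _ hg, a⁻¹, b⁻¹, ?_, ?_⟩
        · apply g.injective
          rw [map_nsmul, h1, ← val_mul_smul W hp, mul_inv_cancel₀ ha, ZMod.val_one, one_smul]
          show (g * g⁻¹) P₁ = P₁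
          rw [mul_inv_cancel]
          rfl
        · apply g.injective
          rw [map_nsmul, h2, ← val_mul_smul W hp, mul_inv_cancel₀ hb, ZMod.val_one, one_smul]
          show (g * g⁻¹) P₂ = P₂
          rw [mul_inv_cancel]
          rfl }
  -- diagonal entries as functions on `S`
  have hdiag : ∀ g : S, ∃ a b : ZMod p,
      (g : AddAut ↥(tors W p)) P₁ = a.val • P₁ ∧ (g : AddAut ↥(tors W p)) P₂ = b.val • P₂ :=
    fun g => g.2.2
  choose A B hA hB using hdiag
  have hA0 : ∀ g : S, A g ≠ 0 := fun g => hne₁ _ _ (hA g)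
  have hB0 : ∀ g : S, B g ≠ 0 := fun g => hne₂ _ _ (hB g)
  have hAmul : ∀ g h : S, A (g * h) = A g * A h := by
    intro g h
    apply diag_unique₁ W hp hbasis (hA (g * h))
    show ((g : AddAut ↥(tors W p)) * (h : AddAut ↥(tors W p))) P₁ = _
    rw [addAutOld_mul_apply, hA h, map_nsmul, hA g, val_mul_smul W hp]
  have hBmul : ∀ g h : S, B (g * h) = B g * B h := by
    intro g h
    apply diag_unique₂ W hp hbasis (hB (g * h))
    show ((g : AddAut ↥(tors W p)) * (h : AddAut ↥(tors W p))) P₂ = _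
    rw [addAutOld_mul_apply, hB h, map_nsmul, hB g, val_mul_smul W hp]
  -- the character sending `g` to the ratio of its diagonal entries
  let χ : S →* (ZMod p)ˣ := MonoidHom.mk' (fun g => Units.mk0 (A g * (B g)⁻¹)
    (mul_ne_zero (hA0 g) (inv_ne_zero (hB0 g)))) (by
      intro g h
      apply Units.ext
      show A (g * h) * (B (g * h))⁻¹ = (A g * (B g)⁻¹) * (A h * (B h)⁻¹)
      rw [hAmul, hBmul, mul_inv_rev]
      field_simp)
  have hχinj : Function.Injective χ := by
    rw [injective_iff_map_eq_one]
    intro g hg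
    have hab : A g = B g := by
      have := congrArg Units.val hg
      exact (mul_inv_eq_one₀ (hB0 g)).mp this
    have ha1 : A g = 1 := hscal _ g.2.1 (A g) (hA g) (by rw [hab]; exact hB g)
    have hone : ∀ x : ↥(tors W p), (g : AddAut ↥(tors W p)) x = x := by
      intro x
      have := scalar_action W hbasis _ (A g) (hA g) (by rw [hab]; exact hB g) x
      rwa [ha1, ZMod.val_one, one_smul] at this
    exact Subtype.ext (DFunLike.ext _ _ hone)
  haveI : IsCyclic S := isCyclic_of_surjective _ (MonoidHom.ofInjective hχinj).symm.surjective
  obtain ⟨g₀, hg₀⟩ := IsCyclic.exists_generator (α := S)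
  apply hnc
  refine ⟨(g₀ : AddAut ↥(tors W p)), g₀.2, ?_⟩
  intro g hg
  obtain ⟨m, hm⟩ := Subgroup.mem_zpowers_iff.mp (hg₀ ⟨g, hg⟩)
  exact Subgroup.mem_zpowers_iff.mpr ⟨m, by
    rw [← SubgroupClass.coe_zpow, hm]⟩

end StepA

/-- Corollary 13 of the paper: fix an `𝔽_p`-basis `{P₁, P₂}` of `E[p]`,
viewing `G₁ ≤ GL₂(𝔽_p)`, and let `G_D = G₁ ∩ D` be the subgroup of elements of `G₁`
acting diagonally.  If `G_D` is not cyclic, then `H¹(G_n, E[pⁿ]) = 0` for every `n`. -/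
theorem H1_eq_zero_of_GD_not_cyclic
    (hp : p.Prime) (hp3 : 3 < p)
    [NumberField k] [W.IsElliptic]
    (P₁ P₂ : ↥(tors W p)) (hbasis : IsPBasis W p P₁ P₂)
    -- `G_D` is not cyclic: no single element of `G_D` generates all of `G_D`
    (hnc : ¬ ∃ g₀ : AddAut ↥(tors W p),
      (g₀ ∈ (torsGalHom W p).range ∧
        ∃ a b : ZMod p, g₀ P₁ = a.val • P₁ ∧ g₀ P₂ = b.val • P₂) ∧
      ∀ g : AddAut ↥(tors W p),
        (g ∈ (torsGalHom W p).range ∧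
          ∃ a b : ZMod p, g P₁ = a.val • P₁ ∧ g P₂ = b.val • P₂) →
        g ∈ Subgroup.zpowers g₀) :
    -- `H¹(G_n, E[pⁿ]) = 0` for every `n ∈ ℕ`
    ∀ n : ℕ, ∀ Z : (torsGalHom W (p ^ n)).range → ↥(tors W (p ^ n)),
      IsCocycle Z → IsCoboundary Z := by
  intro n Z hZ
  haveI := Fact.mk hp
  rcases Nat.eq_zero_or_pos n with hn | hn
  · subst hn
    refine ⟨0, fun g => ?_⟩
    have hzero : ∀ x : ↥(tors W (p ^ 0)), x = 0 := by
      intro x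
      have := tors_nsmul_self W (p ^ 0) x
      exact (one_nsmul x).symm.trans (by simpa using this)
    rw [hzero (Z g), hzero ((g : AddAut ↥(tors W (p ^ 0))) 0 - 0)]
  · obtain ⟨σ, a, ha0, ha1, hσ⟩ := exists_scalar W hp hbasis hnc
    set c := a.val with hc
    set m := p ^ (n - 1) with hm
    set A := torsGalHom W (p ^ n) σ with hAdef
    have hA : ∀ x : ↥(tors W (p ^ n)), p • x = 0 → A x = c • x := scalar_lift W n hσ
    have hsx : ∀ x : ↥(tors W (p ^ n)), (A ^ m) x = c ^ m • x := fun x =>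
      pow_scalar_of_scalar_on_ptors A p c hp.pos hA n hn x (tors_nsmul_self W _ x)
    have hmem : A ^ m ∈ (torsGalHom W (p ^ n)).range := ⟨σ ^ m, by rw [map_pow]⟩
    set u := c ^ m with hu_def
    have hc0 : c ≠ 0 := fun h => ha0 (by rwa [← ZMod.val_eq_zero])
    have hu : 1 ≤ u := Nat.one_le_iff_ne_zero.mpr (pow_ne_zero _ hc0)
    have hum : ((u : ℕ) : ZMod p) = a ^ m := by
      rw [hu_def, Nat.cast_pow, hc, ZMod.natCast_zmod_val]
    have ham : a ^ m ≠ 1 := by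
      intro hh
      have h1 : orderOf a ∣ m := orderOf_dvd_of_pow_eq_one hh
      have h2 : orderOf a ∣ p - 1 :=
        orderOf_dvd_of_pow_eq_one (ZMod.pow_card_sub_one_eq_one ha0)
      have hcp : Nat.Coprime p (p - 1) := by
        have := (Nat.coprime_self_sub_right (n := p) (m := 1) hp.one_le).mpr
          (Nat.coprime_one_right p)
        exact this
      have hcop : Nat.Coprime m (p - 1) := Nat.Coprime.pow_left _ hcp
      have h3 : orderOf a ∣ Nat.gcd m (p - 1) := Nat.dvd_gcd h1 h2
      rw [Nat.Coprime] at hcop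
      rw [hcop, Nat.dvd_one] at h3
      exact ha1 (orderOf_eq_one_iff.mp h3)
    have hd : ¬ p ∣ (u - 1) := by
      intro hdvd
      have h0 : ((u - 1 : ℕ) : ZMod p) = 0 := (ZMod.natCast_eq_zero_iff _ _).mpr hdvd
      rw [Nat.cast_sub hu, hum, Nat.cast_one, sub_eq_zero] at h0
      exact ham h0
    have hcop : Nat.Coprime (u - 1) (p ^ n) :=
      Nat.Coprime.pow_right _ ((Nat.Prime.coprime_iff_not_dvd hp).mpr hd).symm
    obtain ⟨e, -, he⟩ := Nat.exists_mul_mod_eq_one_of_coprime hcop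
      (Nat.one_lt_pow hn.ne' hp.one_lt)
    have he' : ∀ x : ↥(tors W (p ^ n)), (e * (u - 1)) • x = x := by
      intro x
      rw [nsmul_mod (tors_nsmul_self W (p ^ n) x) (e * (u - 1)), mul_comm e (u - 1), he,
        one_nsmul]
    exact isCoboundary_of_scalar Z hZ ⟨A ^ m, hmem⟩ u e hu hsx he'

end LGD
end

section
/- Let p be an odd prime and let H be a subgroup of the subgroup D of diagonal matrices of GL₂(F_p). If H is not cyclic, then H contains a scalar matrix λ·I with λ ∈ F_p^* and λ ≠ 1. -/
/-!
STATEMENT 11: Let `p` be an odd prime and let `H` be a subgroup of the subgroup `D` of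
diagonal matrices of `GL₂(𝔽_p)`.  If `H` is not cyclic, then `H` contains a scalar
matrix `λ·I` with `λ ∈ 𝔽_p^*` and `λ ≠ 1`.
-/

open Matrix

theorem scalar_mem_of_not_cyclic_diagonal_subgroup
    (p : ℕ) (hp : p.Prime) (hodd : p ≠ 2)
    (H : Subgroup (GL (Fin 2) (ZMod p)))
    -- every element of `H` is a diagonal matrix
    (hdiag : ∀ A ∈ H, ∀ i j : Fin 2, i ≠ j →
      (A : Matrix (Fin 2) (Fin 2) (ZMod p)) i j = 0)
    -- `H` is not cyclic
    (hnc : ¬ IsCyclic H) :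
    ∃ A ∈ H, ∃ lam : (ZMod p)ˣ, lam ≠ 1 ∧
      (A : Matrix (Fin 2) (Fin 2) (ZMod p)) = (lam : ZMod p) • (1 : Matrix (Fin 2) (Fin 2) (ZMod p)) := by
  haveI : Fact p.Prime := ⟨hp⟩
  by_contra hcon
  push_neg at hcon
  -- entry homs
  have mul00 : ∀ A B : H, ((A * B : H) : GL (Fin 2) (ZMod p)).1 0 0
      = (A : GL (Fin 2) (ZMod p)).1 0 0 * (B : GL (Fin 2) (ZMod p)).1 0 0 := by
    intro A B
    have h01 : (A : GL (Fin 2) (ZMod p)).1 0 1 = 0 := hdiag A A.2 0 1 (by decide)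
    show ((A : GL (Fin 2) (ZMod p)).1 * (B : GL (Fin 2) (ZMod p)).1) 0 0 = _
    rw [Matrix.mul_apply, Fin.sum_univ_two, h01]
    ring
  have mul11 : ∀ A B : H, ((A * B : H) : GL (Fin 2) (ZMod p)).1 1 1
      = (A : GL (Fin 2) (ZMod p)).1 1 1 * (B : GL (Fin 2) (ZMod p)).1 1 1 := by
    intro A B
    have h10 : (A : GL (Fin 2) (ZMod p)).1 1 0 = 0 := hdiag A A.2 1 0 (by decide)
    show ((A : GL (Fin 2) (ZMod p)).1 * (B : GL (Fin 2) (ZMod p)).1) 1 1 = _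
    rw [Matrix.mul_apply, Fin.sum_univ_two, h10]
    ring
  have inv00 : ∀ A : H, (A : GL (Fin 2) (ZMod p)).1 0 0 * ((A⁻¹ : H) : GL (Fin 2) (ZMod p)).1 0 0 = 1 := by
    intro A
    have := mul00 A A⁻¹
    rw [mul_inv_cancel] at this
    simpa using this.symm
  have inv11 : ∀ A : H, (A : GL (Fin 2) (ZMod p)).1 1 1 * ((A⁻¹ : H) : GL (Fin 2) (ZMod p)).1 1 1 = 1 := by
    intro A
    have := mul11 A A⁻¹
    rw [mul_inv_cancel] at this
    simpa using this.symm
  -- the homs u, v : H →* (ZMod p)ˣ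
  let u : H →* (ZMod p)ˣ := MonoidHom.mk' (fun A =>
      ⟨(A : GL (Fin 2) (ZMod p)).1 0 0, ((A⁻¹ : H) : GL (Fin 2) (ZMod p)).1 0 0,
        inv00 A, by rw [mul_comm]; exact inv00 A⟩)
    (fun A B => Units.ext (mul00 A B))
  let v : H →* (ZMod p)ˣ := MonoidHom.mk' (fun A =>
      ⟨(A : GL (Fin 2) (ZMod p)).1 1 1, ((A⁻¹ : H) : GL (Fin 2) (ZMod p)).1 1 1,
        inv11 A, by rw [mul_comm]; exact inv11 A⟩)
    (fun A B => Units.ext (mul11 A B))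
  let f : H →* (ZMod p)ˣ := u / v
  have hinj : Function.Injective f := by
    rw [injective_iff_map_eq_one]
    intro A hA
    have hval : (A : GL (Fin 2) (ZMod p)).1 0 0 = (A : GL (Fin 2) (ZMod p)).1 1 1 := by
      have : u A = v A := by
        have := hA
        simp only [f, MonoidHom.div_apply, div_eq_one] at this
        exact this
      exact congrArg Units.val this
    -- A is scalar with value u A
    have hmat : (A : GL (Fin 2) (ZMod p)).1
        = ((u A : (ZMod p)ˣ) : ZMod p) • (1 : Matrix (Fin 2) (Fin 2) (ZMod p)) := by
      ext i j
      fin_cases i <;> fin_cases j <;>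
        simp [u, Matrix.smul_apply, Matrix.one_apply, hval,
          hdiag A A.2 0 1 (by decide), hdiag A A.2 1 0 (by decide)]
    have h1 : u A = 1 := by
      by_contra hne
      exact hcon (A : GL (Fin 2) (ZMod p)) A.2 (u A) hne hmat
    -- then matrix is identity
    have : (A : GL (Fin 2) (ZMod p)).1 = 1 := by
      rw [hmat, h1]; simp
    have : (A : GL (Fin 2) (ZMod p)) = 1 := Units.ext this
    exact Subtype.ext this
  have : IsCyclic H := by
    let e := MonoidHom.ofInjective hinj
    exact isCyclic_of_surjective e.symm e.symm.surjective
  exact hnc this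
end
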